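/- arXiv:math/0402461 — 2 statements merged into one kernel-verified Lean document; each statement's English description precedes it below -/
import Mathlib

section
/- Let a ≥ 2 be a positive integer and suppose c and d are positive rationals such that c·a and d·a are positive integers. Then the infinite regular continued fraction [0; d·a, c·a, d·a², c·a², d·a³, c·a³, ...] (with period blocks d·a^k, c·a^k for k = 1, 2, 3, ...) equals (Σ_{n=0}^∞ 1/(c^n · d^{n+1} · a^{(n+1)²} · (1/a; 1/a)_n)) / (Σ_{n=0}^∞ 1/((c·d)^n · a^{n²+n} · (1/a; 1/a)_n)). -/
open Filter Topology

/-- Value of the finite continued fraction `[b₀; b₁, …, bₙ]`. -/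
noncomputable def contFracList : List ℝ → ℝ
  | [] => 0
  | [x] => x
  | x :: y :: xs => x + 1 / contFracList (y :: xs)

/-- The `n`-th convergent `[b 0; b 1, …, b n]` of the infinite regular continued
fraction with partial quotients `b`. -/
noncomputable def cfConv (b : ℕ → ℝ) (n : ℕ) : ℝ :=
  contFracList ((List.range (n + 1)).map b)

/-- The infinite regular continued fraction with partial quotients `b` converges to `L`,
i.e. the limit of its convergents is `L`. -/
def CFracEq (b : ℕ → ℝ) (L : ℝ) : Prop :=
  Filter.Tendsto (cfConv b) Filter.atTop (nhds L)

/-- The q-Pochhammer symbol `(c; q)ₙ = ∏_{j=0}^{n-1} (1 - c qʲ)`. -/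
noncomputable def qPoch (c q : ℝ) (n : ℕ) : ℝ :=
  ∏ j ∈ Finset.range n, (1 - c * q ^ j)

namespace CFAux

noncomputable def K : List ℝ → ℝ
  | [] => 1
  | [x] => x
  | x :: y :: l => x * K (y :: l) + K l

lemma K_nil : K [] = 1 := rfl
lemma K_singleton (x : ℝ) : K [x] = x := rfl
lemma K_cons (x y : ℝ) (l : List ℝ) : K (x :: y :: l) = x * K (y :: l) + K l := rfl

lemma K_pos : ∀ l : List ℝ, (∀ z ∈ l, 0 < z) → 0 < K l := by
  intro l
  induction l using K.induct with
  | case1 => intro _; norm_num [K_nil]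
  | case2 x => intro h; simpa [K_singleton] using h x (by simp)
  | case3 x y l ih1 ih2 =>
    intro h
    rw [K_cons]
    have hx : 0 < x := h x (by simp)
    have h1 : 0 < K (y :: l) := ih1 (fun z hz => h z (List.mem_cons_of_mem _ hz))
    have h2 : 0 < K l := ih2 (fun z hz => h z (List.mem_cons_of_mem _ (List.mem_cons_of_mem _ hz)))
    positivity

lemma contFrac_K : ∀ l : List ℝ, l ≠ [] → (∀ z ∈ l.tail, 0 < z) →
    contFracList l = K l / K l.tail := by
  intro l
  induction l using K.induct with
  | case1 => intro h; exact absurd rfl h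
  | case2 x => intro _ _; simp [contFracList, K_singleton, K_nil]
  | case3 x y l ih1 _ =>
    intro _ h
    have hpos : ∀ z ∈ (y :: l), 0 < z := by simpa using h
    have h1 : 0 < K (y :: l) := K_pos _ hpos
    have h2 : 0 < K l := K_pos _ (fun z hz => hpos z (by simp [hz]))
    have ih := ih1 (by simp) (fun z hz => hpos z (List.mem_cons_of_mem _ (by simpa using hz)))
    show contFracList (x :: y :: l) = K (x :: y :: l) / K (y :: l)
    rw [show contFracList (x :: y :: l) = x + 1 / contFracList (y :: l) from rfl, ih, K_cons]
    rw [show (y :: l).tail = l from rfl]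
    field_simp

lemma K_append (x : ℝ) : ∀ (n : ℕ) (l : List ℝ), l.length ≤ n → l ≠ [] →
    K (l ++ [x]) = x * K l + K l.dropLast := by
  intro n
  induction n with
  | zero =>
    intro l hl hne
    exact absurd (List.eq_nil_of_length_eq_zero (Nat.le_zero.mp hl)) hne
  | succ n ih =>
    intro l hl hne
    match l with
    | [y] => simp [K_singleton, K_cons, K_nil]; ring
    | [y, z] => simp [K_singleton, K_cons, K_nil]; ring
    | y :: z :: w :: t =>
      have e1 : (y :: z :: w :: t) ++ [x] = y :: z :: ((w :: t) ++ [x]) := by simp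
      rw [e1, K_cons, K_cons]
      have ih1 := ih (z :: w :: t) (by simpa using hl) (by simp)
      have ih2 := ih (w :: t) (by simp at hl ⊢; omega) (by simp)
      rw [show z :: (w :: t ++ [x]) = (z :: w :: t) ++ [x] from by simp, ih1, ih2]
      rcases t with _ | ⟨u, t⟩
      · simp only [List.dropLast_cons₂, List.dropLast_singleton, K_cons, K_singleton, K_nil]
        ring
      · simp only [List.dropLast_cons₂, K_cons]
        ring

end CFAux

namespace CFAux

noncomputable def pnum (x : ℕ → ℝ) (n : ℕ) : ℝ := K ((List.range (n+1)).map x)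
noncomputable def pden (x : ℕ → ℝ) (n : ℕ) : ℝ := K (((List.range (n+1)).map x).tail)

lemma range_map_succ (x : ℕ → ℝ) (n : ℕ) :
    (List.range (n+2)).map x = (List.range (n+1)).map x ++ [x (n+1)] := by
  rw [List.range_succ, List.map_append]; rfl

lemma tail_map_ne (x : ℕ → ℝ) (n : ℕ) : ((List.range (n+2)).map x).tail =
    ((List.range (n+1)).map x).tail ++ [x (n+1)] := by
  rw [range_map_succ]
  rcases h : (List.range (n+1)).map x with _ | ⟨a, l⟩
  · exact absurd h (by simp)
  · simp

lemma pnum_zero (x : ℕ → ℝ) : pnum x 0 = x 0 := by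
  simp [pnum, List.range_succ, K_singleton]

lemma pnum_one (x : ℕ → ℝ) : pnum x 1 = x 0 * x 1 + 1 := by
  show K [x 0, x 1] = _
  rw [K_cons, K_singleton, K_nil]

lemma pden_zero (x : ℕ → ℝ) : pden x 0 = 1 := by
  simp [pden, List.range_succ, K_nil]

lemma pden_one (x : ℕ → ℝ) : pden x 1 = x 1 := by
  show K [x 1] = _
  rw [K_singleton]

lemma pnum_rec (x : ℕ → ℝ) (n : ℕ) :
    pnum x (n+2) = x (n+2) * pnum x (n+1) + pnum x n := by
  show K ((List.range (n+3)).map x) = _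
  rw [range_map_succ x (n+1), K_append (x (n+2)) ((List.range (n+2)).map x).length _ le_rfl
    (by simp),
    show ((List.range (n+2)).map x).dropLast = (List.range (n+1)).map x from by
      rw [range_map_succ]; exact List.dropLast_concat]
  rfl

lemma pden_rec (x : ℕ → ℝ) (n : ℕ) :
    pden x (n+2) = x (n+2) * pden x (n+1) + pden x n := by
  show K (((List.range (n+3)).map x).tail) = _
  rw [tail_map_ne x (n+1),
    K_append (x (n+2)) (((List.range (n+2)).map x).tail).length _ le_rfl
      (by intro h; have := congrArg List.length h; simp at this),
    show (((List.range (n+2)).map x).tail).dropLast = ((List.range (n+1)).map x).tail from by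
      rw [tail_map_ne]; exact List.dropLast_concat]
  rfl

lemma tail_entries (x : ℕ → ℝ) (hx : ∀ i, 1 ≤ i → 0 < x i) (n : ℕ) :
    ∀ z ∈ ((List.range (n+1)).map x).tail, 0 < z := by
  intro z hz
  rw [List.range_succ_eq_map, List.map_cons, List.tail_cons, List.map_map] at hz
  obtain ⟨i, _, rfl⟩ := List.mem_map.mp hz
  exact hx _ (Nat.succ_le_succ (Nat.zero_le i))

lemma pden_pos (x : ℕ → ℝ) (hx : ∀ i, 1 ≤ i → 0 < x i) (n : ℕ) : 0 < pden x n :=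
  K_pos _ (tail_entries x hx n)

lemma conv_eq (x : ℕ → ℝ) (hx : ∀ i, 1 ≤ i → 0 < x i) (n : ℕ) :
    cfConv x n = pnum x n / pden x n := by
  unfold cfConv pnum pden
  exact contFrac_K _ (by simp) (tail_entries x hx n)

end CFAux

namespace CFAux

noncomputable def qp (q : ℝ) (n : ℕ) : ℝ := ∏ i ∈ Finset.range n, (1 - q^(i+1))

noncomputable def Gq (q : ℝ) (N k : ℕ) : ℝ := (∏ i ∈ Finset.range k, (1 - q^(N-i))) / qp q k

lemma qp_succ (q : ℝ) (n : ℕ) : qp q (n+1) = qp q n * (1 - q^(n+1)) :=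
  Finset.prod_range_succ _ n

lemma qp_pos {q : ℝ} (hq0 : 0 ≤ q) (hq1 : q < 1) (n : ℕ) : 0 < qp q n := by
  apply Finset.prod_pos
  intro i _
  have : q^(i+1) < 1 := pow_lt_one₀ hq0 hq1 (Nat.succ_ne_zero i)
  linarith

lemma Gq_zero (q : ℝ) (N : ℕ) : Gq q N 0 = 1 := by simp [Gq, qp]

lemma Gq_of_lt (q : ℝ) {N k : ℕ} (h : N < k) : Gq q N k = 0 := by
  unfold Gq
  rw [Finset.prod_eq_zero (Finset.mem_range.mpr h) (by simp), zero_div]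

lemma Gq_nonneg {q : ℝ} (hq0 : 0 ≤ q) (hq1 : q < 1) (N k : ℕ) : 0 ≤ Gq q N k := by
  apply div_nonneg _ (qp_pos hq0 hq1 k).le
  apply Finset.prod_nonneg
  intro i _
  have : q^(N-i) ≤ 1 := pow_le_one₀ hq0 hq1.le
  linarith

lemma Gq_le {q : ℝ} (hq0 : 0 ≤ q) (hq1 : q < 1) (N k : ℕ) : Gq q N k ≤ 1 / qp q k := by
  unfold Gq
  have h1 : ∏ i ∈ Finset.range k, (1 - q^(N-i)) ≤ 1 :=
    Finset.prod_le_one (fun i _ => sub_nonneg.mpr (pow_le_one₀ hq0 hq1.le))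
      (fun i _ => by nlinarith [pow_nonneg hq0 (N-i)])
  gcongr
  exact (qp_pos hq0 hq1 k).le

lemma Gq_pascal {q : ℝ} (hq0 : 0 ≤ q) (hq1 : q < 1) (N k : ℕ) :
    Gq q (N+1) (k+1) = Gq q N (k+1) + q^(N-k) * Gq q N k := by
  rcases le_or_gt k N with h | h
  · have hnum : ∏ i ∈ Finset.range (k+1), (1 - q^(N+1-i)) =
        ∏ i ∈ Finset.range (k+1), (1 - q^(N-i)) +
          q^(N-k) * (1 - q^(k+1)) * ∏ i ∈ Finset.range k, (1 - q^(N-i)) := by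
      rw [Finset.prod_range_succ' (fun i => (1 - q^(N+1-i))) k]
      have e1 : ∀ i, N+1-(i+1) = N-i := fun i => by omega
      simp only [e1, Nat.sub_zero]
      rw [Finset.prod_range_succ (fun i => (1 - q^(N-i))) k]
      have e2 : q^(N-k) * q^(k+1) = q^(N+1) := by rw [← pow_add]; congr 1; omega
      linear_combination (∏ x ∈ Finset.range k, (1 - q ^ (N - x))) * e2
    unfold Gq
    rw [hnum, qp_succ]
    have h1 : qp q k ≠ 0 := (qp_pos hq0 hq1 k).ne'
    have h2 : (1 : ℝ) - q^(k+1) ≠ 0 := by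
      have : q^(k+1) < 1 := pow_lt_one₀ hq0 hq1 (Nat.succ_ne_zero k)
      linarith
    field_simp
  · rw [Gq_of_lt q (by omega), Gq_of_lt q (by omega), Gq_of_lt q (by omega)]
    ring

lemma Gq_tendsto {q : ℝ} (hq0 : 0 ≤ q) (hq1 : q < 1) (j : ℕ) :
    Filter.Tendsto (fun N => Gq q N j) Filter.atTop (nhds (1 / qp q j)) := by
  have hnum : Filter.Tendsto (fun N => ∏ i ∈ Finset.range j, (1 - q^(N-i)))
      Filter.atTop (nhds 1) := by
    have := tendsto_finset_prod (Finset.range j)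
      (fun i _ => ((tendsto_pow_atTop_nhds_zero_of_lt_one hq0 hq1).comp
        (tendsto_sub_atTop_nat i)).const_sub 1)
    simpa using this
  have := hnum.div_const (qp q j)
  simpa [Gq] using this

end CFAux

namespace CFAux

noncomputable def t1 (q E : ℝ) (m j : ℕ) : ℝ := E^j * q^(j*j+j) * Gq q (2*m-j) j
noncomputable def t2 (q E : ℝ) (m j : ℕ) : ℝ := E^j * q^(j*j+j) * Gq q (2*m+1-j) j
noncomputable def t3 (q E : ℝ) (m j : ℕ) : ℝ := E^j * q^(j*j+2*j) * Gq q (2*m-1-j) j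
noncomputable def t4 (q E : ℝ) (m j : ℕ) : ℝ := E^j * q^(j*j+2*j) * Gq q (2*m-j) j

lemma core {q : ℝ} (hq0 : 0 ≤ q) (hq1 : q < 1) (E : ℝ) (u j w e1 e0 : ℕ)
    (hw : e1 + u = w + e0) :
    E^(j+1) * q^e1 * Gq q (j+u+1) (j+1) =
      E^(j+1) * q^e1 * Gq q (j+u) (j+1) + (E * q^w) * (E^j * q^e0 * Gq q (j+u) j) := by
  rw [Gq_pascal hq0 hq1 (j+u) j, show j + u - j = u from by omega]
  have h2 : q^e1 * q^u = q^w * q^e0 := by rw [← pow_add, ← pow_add, hw]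
  calc E^(j+1) * q^e1 * (Gq q (j+u) (j+1) + q^u * Gq q (j+u) j)
      = E^(j+1)*q^e1*Gq q (j+u) (j+1) + (q^e1*q^u) * (E^(j+1) * Gq q (j+u) j) := by ring
    _ = E^(j+1)*q^e1*Gq q (j+u) (j+1) + (q^w*q^e0) * (E^(j+1) * Gq q (j+u) j) := by rw [h2]
    _ = _ := by ring

lemma sumI1 {q : ℝ} (hq0 : 0 ≤ q) (hq1 : q < 1) (E : ℝ) (m : ℕ) :
    ∑ j ∈ Finset.range (m+2), t2 q E (m+1) j =
      ∑ j ∈ Finset.range (m+2), t1 q E (m+1) j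
        + E*q^(2*m+3) * ∑ j ∈ Finset.range (m+1), t2 q E m j := by
  rw [Finset.sum_range_succ' (t2 q E (m+1)) (m+1),
    Finset.sum_range_succ' (t1 q E (m+1)) (m+1), Finset.mul_sum]
  have h0 : t2 q E (m+1) 0 = t1 q E (m+1) 0 := by simp [t1, t2, Gq_zero]
  have hterm : ∀ j ∈ Finset.range (m+1), t2 q E (m+1) (j+1) =
      t1 q E (m+1) (j+1) + (E*q^(2*m+3)) * t2 q E m j := by
    intro j hj
    have hj' : j ≤ m := by simpa [Nat.lt_succ_iff] using hj
    unfold t1 t2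
    rw [show 2*(m+1)+1-(j+1) = j + (2*m+1-2*j) + 1 from by omega,
        show 2*(m+1)-(j+1) = j + (2*m+1-2*j) from by omega,
        show 2*m+1-j = j + (2*m+1-2*j) from by omega]
    exact core hq0 hq1 E (2*m+1-2*j) j (2*m+3) ((j+1)*(j+1)+(j+1)) (j*j+j)
      (by rw [show (j+1)*(j+1) = j*j+2*j+1 from by ring]; generalize j*j = s; omega)
  rw [Finset.sum_congr rfl hterm, Finset.sum_add_distrib, h0]
  ring

lemma sumI2 {q : ℝ} (hq0 : 0 ≤ q) (hq1 : q < 1) (E : ℝ) (m : ℕ) :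
    ∑ j ∈ Finset.range (m+2), t1 q E (m+1) j =
      ∑ j ∈ Finset.range (m+1), t2 q E m j
        + E*q^(2*m+2) * ∑ j ∈ Finset.range (m+1), t1 q E m j := by
  have hz : t2 q E m (m+1) = 0 := by
    unfold t2
    rw [show 2*m+1-(m+1) = m from by omega, Gq_of_lt q (Nat.lt_succ_self m)]
    ring
  have hext : ∑ j ∈ Finset.range (m+2), t2 q E m j = ∑ j ∈ Finset.range (m+1), t2 q E m j := by
    rw [Finset.sum_range_succ, hz, add_zero]
  rw [← hext, Finset.sum_range_succ' (t1 q E (m+1)) (m+1),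
    Finset.sum_range_succ' (t2 q E m) (m+1), Finset.mul_sum]
  have h0 : t1 q E (m+1) 0 = t2 q E m 0 := by simp [t1, t2, Gq_zero]
  have hterm : ∀ j ∈ Finset.range (m+1), t1 q E (m+1) (j+1) =
      t2 q E m (j+1) + (E*q^(2*m+2)) * t1 q E m j := by
    intro j hj
    have hj' : j ≤ m := by simpa [Nat.lt_succ_iff] using hj
    unfold t1 t2
    rw [show 2*(m+1)-(j+1) = j + (2*m-2*j) + 1 from by omega,
        show 2*m+1-(j+1) = j + (2*m-2*j) from by omega,
        show 2*m-j = j + (2*m-2*j) from by omega]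
    exact core hq0 hq1 E (2*m-2*j) j (2*m+2) ((j+1)*(j+1)+(j+1)) (j*j+j)
      (by rw [show (j+1)*(j+1) = j*j+2*j+1 from by ring]; generalize j*j = s; omega)
  rw [Finset.sum_congr rfl hterm, Finset.sum_add_distrib, h0]
  ring

lemma sumI3 {q : ℝ} (hq0 : 0 ≤ q) (hq1 : q < 1) (E : ℝ) (m : ℕ) :
    ∑ j ∈ Finset.range (m+2), t4 q E (m+1) j =
      ∑ j ∈ Finset.range (m+1), t3 q E (m+1) j
        + E*q^(2*m+3) * ∑ j ∈ Finset.range (m+1), t4 q E m j := by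
  have hz : t3 q E (m+1) (m+1) = 0 := by
    unfold t3
    rw [show 2*(m+1)-1-(m+1) = m from by omega, Gq_of_lt q (Nat.lt_succ_self m)]
    ring
  have hext : ∑ j ∈ Finset.range (m+2), t3 q E (m+1) j
      = ∑ j ∈ Finset.range (m+1), t3 q E (m+1) j := by
    rw [Finset.sum_range_succ, hz, add_zero]
  rw [← hext, Finset.sum_range_succ' (t4 q E (m+1)) (m+1),
    Finset.sum_range_succ' (t3 q E (m+1)) (m+1), Finset.mul_sum]
  have h0 : t4 q E (m+1) 0 = t3 q E (m+1) 0 := by simp [t3, t4, Gq_zero]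
  have hterm : ∀ j ∈ Finset.range (m+1), t4 q E (m+1) (j+1) =
      t3 q E (m+1) (j+1) + (E*q^(2*m+3)) * t4 q E m j := by
    intro j hj
    have hj' : j ≤ m := by simpa [Nat.lt_succ_iff] using hj
    unfold t3 t4
    rw [show 2*(m+1)-(j+1) = j + (2*m-2*j) + 1 from by omega,
        show 2*(m+1)-1-(j+1) = j + (2*m-2*j) from by omega,
        show 2*m-j = j + (2*m-2*j) from by omega]
    exact core hq0 hq1 E (2*m-2*j) j (2*m+3) ((j+1)*(j+1)+2*(j+1)) (j*j+2*j)
      (by rw [show (j+1)*(j+1) = j*j+2*j+1 from by ring]; generalize j*j = s; omega)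
  rw [Finset.sum_congr rfl hterm, Finset.sum_add_distrib, h0]
  ring

lemma sumI4 {q : ℝ} (hq0 : 0 ≤ q) (hq1 : q < 1) (E : ℝ) (m : ℕ) :
    ∑ j ∈ Finset.range (m+1), t3 q E (m+1) j =
      ∑ j ∈ Finset.range (m+1), t4 q E m j
        + E*q^(2*m+2) * ∑ j ∈ Finset.range m, t3 q E m j := by
  rw [Finset.sum_range_succ' (t3 q E (m+1)) m,
    Finset.sum_range_succ' (t4 q E m) m, Finset.mul_sum]
  have h0 : t3 q E (m+1) 0 = t4 q E m 0 := by simp [t3, t4, Gq_zero]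
  have hterm : ∀ j ∈ Finset.range m, t3 q E (m+1) (j+1) =
      t4 q E m (j+1) + (E*q^(2*m+2)) * t3 q E m j := by
    intro j hj
    have hj' : j < m := Finset.mem_range.mp hj
    unfold t3 t4
    rw [show 2*(m+1)-1-(j+1) = j + (2*m-2*j-1) + 1 from by omega,
        show 2*m-(j+1) = j + (2*m-2*j-1) from by omega,
        show 2*m-1-j = j + (2*m-2*j-1) from by omega]
    exact core hq0 hq1 E (2*m-2*j-1) j (2*m+2) ((j+1)*(j+1)+2*(j+1)) (j*j+2*j)
      (by rw [show (j+1)*(j+1) = j*j+2*j+1 from by ring]; generalize j*j = s; omega)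
  rw [Finset.sum_congr rfl hterm, Finset.sum_add_distrib, h0]
  ring

end CFAux

namespace CFAux

lemma closed_forms (A C D : ℝ) (hA : 1 < A) (hC : 0 < C) (hD : 0 < D)
    (b : ℕ → ℝ) (hb0 : b 0 = 0)
    (hb1 : ∀ m : ℕ, b (2*m+1) = D * A^(m+1)) (hb2 : ∀ m : ℕ, b (2*m+2) = C * A^(m+1)) :
    ∀ m : ℕ,
      pden b (2*m) = (C*D)^m * A^(m*m+m) * ∑ j ∈ Finset.range (m+1), t1 A⁻¹ (C*D)⁻¹ m j ∧
      pden b (2*m+1) = (C*D)^m * D * A^(m*m+2*m+1) * ∑ j ∈ Finset.range (m+1), t2 A⁻¹ (C*D)⁻¹ m j ∧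
      D*A*pnum b (2*m) = (C*D)^m * A^(m*m+m) * ∑ j ∈ Finset.range m, t3 A⁻¹ (C*D)⁻¹ m j ∧
      pnum b (2*m+1) = (C*D)^m * A^(m*m+2*m) * ∑ j ∈ Finset.range (m+1), t4 A⁻¹ (C*D)⁻¹ m j := by
  have hA0 : (0:ℝ) < A := lt_trans one_pos hA
  have hAne : A ≠ 0 := hA0.ne'
  have hCne : C ≠ 0 := hC.ne'
  have hDne : D ≠ 0 := hD.ne'
  have hq0 : (0:ℝ) ≤ A⁻¹ := (inv_pos.mpr hA0).le
  have hq1 : A⁻¹ < 1 := inv_lt_one_of_one_lt₀ hA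
  intro m
  induction m with
  | zero =>
    refine ⟨?_, ?_, ?_, ?_⟩
    · rw [pden_zero]
      simp [t1, Gq_zero]
    · rw [pden_one, hb1 0]
      simp [t2, Gq_zero]
    · rw [pnum_zero, hb0]
      simp
    · rw [pnum_one, hb0, hb1 0]
      simp [t4, Gq_zero]
  | succ m ih =>
    obtain ⟨H1, H2, H3, H4⟩ := ih
    have G1 : pden b (2*(m+1)) = (C*D)^(m+1) * A^((m+1)*(m+1)+(m+1))
        * ∑ j ∈ Finset.range (m+1+1), t1 A⁻¹ (C*D)⁻¹ (m+1) j := by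
      rw [show 2*(m+1) = 2*m+2 from by ring, pden_rec b (2*m), hb2 m, H1, H2,
        show m+1+1 = m+2 from rfl, sumI2 hq0 hq1 (C*D)⁻¹ m]
      simp only [inv_pow]
      field_simp
      ring
    have G3 : D*A*pnum b (2*(m+1)) = (C*D)^(m+1) * A^((m+1)*(m+1)+(m+1))
        * ∑ j ∈ Finset.range (m+1), t3 A⁻¹ (C*D)⁻¹ (m+1) j := by
      rw [show 2*(m+1) = 2*m+2 from by ring, pnum_rec b (2*m), hb2 m, sumI4 hq0 hq1 (C*D)⁻¹ m]
      rw [show D*A*(C * A ^ (m + 1) * pnum b (2 * m + 1) + pnum b (2 * m))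
          = C * D * A^(m+2) * pnum b (2*m+1) + D*A*pnum b (2*m) from by ring, H4, H3]
      simp only [inv_pow]
      field_simp
      ring
    refine ⟨G1, ?_, G3, ?_⟩
    · rw [show 2*(m+1)+1 = 2*m+1+2 from by ring, pden_rec b (2*m+1),
        show 2*m+1+2 = 2*(m+1)+1 from by ring, hb1 (m+1),
        show 2*m+1+1 = 2*(m+1) from by ring, G1, H2,
        show m+1+1 = m+2 from rfl, sumI1 hq0 hq1 (C*D)⁻¹ m]
      simp only [inv_pow]
      field_simp
      ring
    · rw [show 2*(m+1)+1 = 2*m+1+2 from by ring, pnum_rec b (2*m+1),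
        show 2*m+1+2 = 2*(m+1)+1 from by ring, hb1 (m+1),
        show 2*m+1+1 = 2*(m+1) from by ring,
        show D * A ^ (m + 1 + 1) * pnum b (2 * (m+1)) + pnum b (2 * m + 1)
          = A^(m+1) * (D * A * pnum b (2*(m+1))) + pnum b (2*m+1) from by ring,
        G3, H4, show m+1+1 = m+2 from rfl, sumI3 hq0 hq1 (C*D)⁻¹ m]
      simp only [inv_pow]
      field_simp
      ring

end CFAux

namespace CFAux

lemma bound_summable {q E : ℝ} (hq0 : 0 < q) (hq1 : q < 1) (hE : 0 < E) :
    Summable (fun j : ℕ => E^j * q^(j*j+j) * (1/qp q j)) := by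
  set g := fun j : ℕ => E^j * q^(j*j+j) * (1/qp q j) with hg
  have hqp : ∀ j : ℕ, 0 < qp q j := qp_pos hq0.le hq1
  have hqj : ∀ j : ℕ, (0:ℝ) < 1 - q^(j+1) := fun j => by
    have : q^(j+1) < 1 := pow_lt_one₀ hq0.le hq1 (Nat.succ_ne_zero j)
    linarith
  have hgpos : ∀ j, 0 < g j := fun j =>
    mul_pos (mul_pos (pow_pos hE j) (pow_pos hq0 _)) (one_div_pos.mpr (hqp j))
  have key : ∀ j : ℕ, g (j+1) = g j * (E * q^(2*j+2) / (1 - q^(j+1))) := by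
    intro j
    rw [hg]
    simp only
    rw [qp_succ, show (j+1)*(j+1)+(j+1) = (j*j+j)+(2*j+2) from by ring, pow_add]
    field_simp
    ring
  have hr : Filter.Tendsto (fun j : ℕ => E * q^(2*j+2) / (1-q^(j+1)))
      Filter.atTop (nhds 0) := by
    have hnum : Filter.Tendsto (fun j : ℕ => E * q^(2*j+2)) Filter.atTop (nhds 0) := by
      have h2 : Filter.Tendsto (fun j : ℕ => q^(2*j+2)) Filter.atTop (nhds 0) :=
        (tendsto_pow_atTop_nhds_zero_of_lt_one hq0.le hq1).comp
          (Filter.tendsto_atTop_mono (fun j => by simp only [id_eq]; omega) Filter.tendsto_id)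
      simpa using h2.const_mul E
    have hden : Filter.Tendsto (fun j : ℕ => 1 - q^(j+1)) Filter.atTop (nhds 1) := by
      have h2 : Filter.Tendsto (fun j : ℕ => q^(j+1)) Filter.atTop (nhds 0) :=
        (tendsto_pow_atTop_nhds_zero_of_lt_one hq0.le hq1).comp
          (Filter.tendsto_atTop_mono (fun j => by simp only [id_eq]; omega) Filter.tendsto_id)
      simpa using h2.const_sub 1
    simpa [Pi.div_def] using hnum.div hden one_ne_zero
  apply summable_of_ratio_norm_eventually_le (r := 1/2) (by norm_num)
  have hev : ∀ᶠ j : ℕ in Filter.atTop, E * q^(2*j+2) / (1-q^(j+1)) < 1/2 :=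
    hr.eventually (gt_mem_nhds (by norm_num))
  filter_upwards [hev] with j hj
  rw [key j, Real.norm_eq_abs, Real.norm_eq_abs, abs_of_pos (hgpos j),
    abs_of_pos (mul_pos (hgpos j) (div_pos (mul_pos hE (pow_pos hq0 _)) (hqj j)))]
  have h1 : 0 ≤ E * q^(2*j+2) / (1-q^(j+1)) := le_of_lt (div_pos (mul_pos hE (pow_pos hq0 _)) (hqj j))
  nlinarith [hgpos j]

lemma sum_tendsto {q E : ℝ} (hq0 : 0 < q) (hq1 : q < 1) (hE : 0 < E)
    (c : ℕ → ℕ) (hc : ∀ j, j*j+j ≤ c j)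
    (N : ℕ → ℕ → ℕ) (hN : ∀ j, Filter.Tendsto (fun m => N m j) Filter.atTop Filter.atTop)
    (len : ℕ → ℕ) (hlen : Filter.Tendsto len Filter.atTop Filter.atTop) :
    Filter.Tendsto (fun m => ∑ j ∈ Finset.range (len m), E^j * q^(c j) * Gq q (N m j) j)
      Filter.atTop (nhds (∑' j : ℕ, E^j * q^(c j) * (1/qp q j))) := by
  set f : ℕ → ℕ → ℝ := fun m j => if j < len m then E^j * q^(c j) * Gq q (N m j) j else 0
    with hf
  have hfs : ∀ m, ∑ j ∈ Finset.range (len m), E^j * q^(c j) * Gq q (N m j) j = ∑' j, f m j := by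
    intro m
    rw [tsum_eq_sum (s := Finset.range (len m))
      (fun j hj => by simp [hf, Finset.mem_range.not.mp hj])]
    exact Finset.sum_congr rfl (fun j hj => by simp [hf, Finset.mem_range.mp hj])
  have main : Filter.Tendsto (fun m => ∑' j, f m j) Filter.atTop
      (nhds (∑' j : ℕ, E^j * q^(c j) * (1/qp q j))) := by
    apply tendsto_tsum_of_dominated_convergence
      (bound := fun j : ℕ => E^j * q^(j*j+j) * (1/qp q j)) (bound_summable hq0 hq1 hE)
    · intro j
      have h1 : Filter.Tendsto (fun m => E^j * q^(c j) * Gq q (N m j) j) Filter.atTop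
          (nhds (E^j * q^(c j) * (1/qp q j))) :=
        ((Gq_tendsto hq0.le hq1 j).comp (hN j)).const_mul _
      apply h1.congr'
      filter_upwards [hlen.eventually_gt_atTop j] with m hm
      simp [hf, hm]
    · apply Filter.Eventually.of_forall
      intro m j
      rw [hf]
      simp only
      by_cases hj : j < len m
      · rw [if_pos hj, Real.norm_eq_abs, abs_of_nonneg (by
          have := Gq_nonneg hq0.le hq1 (N m j) j
          positivity)]
        have hpow : q^(c j) ≤ q^(j*j+j) := pow_le_pow_of_le_one hq0.le hq1.le (hc j)
        have hGq := Gq_le hq0.le hq1 (N m j) j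
        have hGn := Gq_nonneg hq0.le hq1 (N m j) j
        have hqp := qp_pos hq0.le hq1 j
        apply mul_le_mul (mul_le_mul le_rfl hpow (pow_nonneg hq0.le _) (pow_nonneg hE.le _))
          hGq hGn (by positivity)
      · rw [if_neg hj]
        have hqp := qp_pos hq0.le hq1 j
        simp only [norm_zero]
        positivity
  exact main.congr (fun m => (hfs m).symm)

end CFAux

namespace CFAux

lemma tendsto_parity {f : ℕ → ℝ} {L : ℝ}
    (he : Filter.Tendsto (fun m => f (2*m)) Filter.atTop (nhds L))
    (ho : Filter.Tendsto (fun m => f (2*m+1)) Filter.atTop (nhds L)) :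
    Filter.Tendsto f Filter.atTop (nhds L) := by
  rw [Metric.tendsto_atTop] at he ho ⊢
  intro ε hε
  obtain ⟨N1, h1⟩ := he ε hε
  obtain ⟨N2, h2⟩ := ho ε hε
  refine ⟨2*N1+2*N2+2, fun n hn => ?_⟩
  rcases Nat.even_or_odd n with ⟨k, hk⟩ | ⟨k, hk⟩
  · have := h1 k (by omega)
    rwa [show 2*k = n from by omega] at this
  · have := h2 k (by omega)
    rwa [show 2*k+1 = n from by omega] at this

end CFAux


/-- Theorem 1.1 (eq. (1.6)): for integer `a ≥ 2` and positive rationals `c, d` with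
`c·a, d·a ∈ ℤ⁺`, the continued fraction `[0; d·a, c·a, d·a², c·a², …]` equals the
given ratio of series. -/
theorem statement0 (a : ℕ) (ha : 2 ≤ a) (c d : ℚ) (hc : 0 < c) (hd : 0 < d)
    (hca : ∃ k : ℕ, 0 < k ∧ c * (a : ℚ) = (k : ℚ))
    (hda : ∃ k : ℕ, 0 < k ∧ d * (a : ℚ) = (k : ℚ)) :
    CFracEq
      (fun i => if i = 0 then 0
        else if i % 2 = 1 then (d : ℝ) * (a : ℝ) ^ ((i + 1) / 2)
        else (c : ℝ) * (a : ℝ) ^ (i / 2))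
      ((∑' n : ℕ, 1 / ((c : ℝ) ^ n * (d : ℝ) ^ (n + 1) * (a : ℝ) ^ ((n + 1) ^ 2) *
          qPoch (1 / (a : ℝ)) (1 / (a : ℝ)) n)) /
        (∑' n : ℕ, 1 / (((c : ℝ) * (d : ℝ)) ^ n * (a : ℝ) ^ (n ^ 2 + n) *
          qPoch (1 / (a : ℝ)) (1 / (a : ℝ)) n))) := by
  clear hca hda
  have hA1 : (1:ℝ) < (a:ℝ) := by exact_mod_cast (by omega : 1 < a)
  have hA0 : (0:ℝ) < (a:ℝ) := lt_trans one_pos hA1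
  have hC : (0:ℝ) < (c:ℝ) := by exact_mod_cast hc
  have hD : (0:ℝ) < (d:ℝ) := by exact_mod_cast hd
  set A : ℝ := (a:ℝ) with hAdef
  set C : ℝ := (c:ℝ) with hCdef
  set D : ℝ := (d:ℝ) with hDdef
  have hq0 : (0:ℝ) < A⁻¹ := inv_pos.mpr hA0
  have hq1 : A⁻¹ < 1 := inv_lt_one_of_one_lt₀ hA1
  have hE : (0:ℝ) < (C*D)⁻¹ := inv_pos.mpr (mul_pos hC hD)
  set b : ℕ → ℝ := fun i => if i = 0 then 0
      else if i % 2 = 1 then D * A ^ ((i + 1) / 2)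
      else C * A ^ (i / 2) with hbdef
  rw [CFracEq]
  -- facts about b
  have hb0 : b 0 = 0 := by rw [hbdef]; simp
  have hb1 : ∀ m : ℕ, b (2*m+1) = D * A^(m+1) := by
    intro m
    rw [hbdef]
    simp only
    rw [if_neg (by omega), if_pos (by omega), show (2*m+1+1)/2 = m+1 from by omega]
  have hb2 : ∀ m : ℕ, b (2*m+2) = C * A^(m+1) := by
    intro m
    rw [hbdef]
    simp only
    rw [if_neg (by omega), if_neg (by omega), show (2*m+2)/2 = m+1 from by omega]
  have hbpos : ∀ i, 1 ≤ i → 0 < b i := by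
    intro i hi
    rcases Nat.even_or_odd i with ⟨k, hk⟩ | ⟨k, hk⟩
    · rw [show i = 2*(k-1)+2 from by omega, hb2]
      positivity
    · rw [show i = 2*k+1 from by omega, hb1]
      positivity
  have hcf := CFAux.closed_forms A C D hA1 hC hD b hb0 hb1 hb2
  -- the limit sums
  set DD : ℝ := ∑' j : ℕ, ((C*D)⁻¹)^j * (A⁻¹)^(j*j+j) * (1/CFAux.qp A⁻¹ j) with hDDdef
  set NN : ℝ := ∑' j : ℕ, ((C*D)⁻¹)^j * (A⁻¹)^(j*j+2*j) * (1/CFAux.qp A⁻¹ j) with hNNdef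
  have hqppos : ∀ j : ℕ, 0 < CFAux.qp A⁻¹ j := CFAux.qp_pos hq0.le hq1
  have hDD_sum : Summable (fun j : ℕ => ((C*D)⁻¹)^j * (A⁻¹)^(j*j+j) * (1/CFAux.qp A⁻¹ j)) :=
    CFAux.bound_summable hq0 hq1 hE
  have hDDpos : 0 < DD := by
    rw [hDDdef]
    apply Summable.tsum_pos hDD_sum (fun j => by have := hqppos j; positivity) 0
    have := hqppos 0
    positivity
  -- limits of the four sums
  have hN1 : ∀ j : ℕ, Filter.Tendsto (fun m => 2*m - j) Filter.atTop Filter.atTop :=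
    fun j => Filter.tendsto_atTop_mono (fun m => by omega) (tendsto_sub_atTop_nat j)
  have hN2 : ∀ j : ℕ, Filter.Tendsto (fun m => 2*m+1 - j) Filter.atTop Filter.atTop :=
    fun j => Filter.tendsto_atTop_mono (fun m => by omega) (tendsto_sub_atTop_nat j)
  have hN3 : ∀ j : ℕ, Filter.Tendsto (fun m => 2*m-1 - j) Filter.atTop Filter.atTop :=
    fun j => Filter.tendsto_atTop_mono (fun m => by omega) (tendsto_sub_atTop_nat (j+1))
  have hlen1 : Filter.Tendsto (fun m : ℕ => m+1) Filter.atTop Filter.atTop :=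
    Filter.tendsto_atTop_mono (fun m => by simp only [id_eq]; omega) Filter.tendsto_id
  have L1 : Filter.Tendsto (fun m => ∑ j ∈ Finset.range (m+1), CFAux.t1 A⁻¹ (C*D)⁻¹ m j)
      Filter.atTop (nhds DD) :=
    CFAux.sum_tendsto hq0 hq1 hE (fun j => j*j+j) (fun j => le_rfl)
      (fun m j => 2*m - j) hN1 (fun m => m+1) hlen1
  have L2 : Filter.Tendsto (fun m => ∑ j ∈ Finset.range (m+1), CFAux.t2 A⁻¹ (C*D)⁻¹ m j)
      Filter.atTop (nhds DD) :=
    CFAux.sum_tendsto hq0 hq1 hE (fun j => j*j+j) (fun j => le_rfl)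
      (fun m j => 2*m+1 - j) hN2 (fun m => m+1) hlen1
  have L3 : Filter.Tendsto (fun m => ∑ j ∈ Finset.range m, CFAux.t3 A⁻¹ (C*D)⁻¹ m j)
      Filter.atTop (nhds NN) :=
    CFAux.sum_tendsto hq0 hq1 hE (fun j => j*j+2*j)
      (fun j => Nat.add_le_add_left (by omega) (j*j))
      (fun m j => 2*m-1 - j) hN3 (fun m => m) Filter.tendsto_id
  have L4 : Filter.Tendsto (fun m => ∑ j ∈ Finset.range (m+1), CFAux.t4 A⁻¹ (C*D)⁻¹ m j)
      Filter.atTop (nhds NN) :=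
    CFAux.sum_tendsto hq0 hq1 hE (fun j => j*j+2*j)
      (fun j => Nat.add_le_add_left (by omega) (j*j))
      (fun m j => 2*m - j) hN1 (fun m => m+1) hlen1
  -- representation of convergents
  have hrepr_even : ∀ m, cfConv b (2*m) =
      (∑ j ∈ Finset.range m, CFAux.t3 A⁻¹ (C*D)⁻¹ m j) /
        (D*A*(∑ j ∈ Finset.range (m+1), CFAux.t1 A⁻¹ (C*D)⁻¹ m j)) := by
    intro m
    obtain ⟨H1, _, H3, _⟩ := hcf m
    have hX : (0:ℝ) < (C*D)^m * A^(m*m+m) := by positivity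
    have hpden := CFAux.pden_pos b hbpos (2*m)
    have hS1 : 0 < ∑ j ∈ Finset.range (m+1), CFAux.t1 A⁻¹ (C*D)⁻¹ m j := by
      rw [H1] at hpden
      rcases mul_pos_iff.mp hpden with ⟨_, h⟩ | ⟨h, _⟩
      · exact h
      · exact absurd hX (not_lt.mpr h.le)
    rw [CFAux.conv_eq b hbpos (2*m),
      div_eq_div_iff (CFAux.pden_pos b hbpos (2*m)).ne' (by positivity)]
    rw [H1]
    linear_combination (∑ j ∈ Finset.range (m+1), CFAux.t1 A⁻¹ (C*D)⁻¹ m j) * H3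
  have hrepr_odd : ∀ m, cfConv b (2*m+1) =
      (∑ j ∈ Finset.range (m+1), CFAux.t4 A⁻¹ (C*D)⁻¹ m j) /
        (D*A*(∑ j ∈ Finset.range (m+1), CFAux.t2 A⁻¹ (C*D)⁻¹ m j)) := by
    intro m
    obtain ⟨_, H2, _, H4⟩ := hcf m
    have hX : (0:ℝ) < (C*D)^m * D * A^(m*m+2*m+1) := by positivity
    have hpden := CFAux.pden_pos b hbpos (2*m+1)
    have hS2 : 0 < ∑ j ∈ Finset.range (m+1), CFAux.t2 A⁻¹ (C*D)⁻¹ m j := by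
      rw [H2] at hpden
      rcases mul_pos_iff.mp hpden with ⟨_, h⟩ | ⟨h, _⟩
      · exact h
      · exact absurd hX (not_lt.mpr h.le)
    rw [CFAux.conv_eq b hbpos (2*m+1),
      div_eq_div_iff (CFAux.pden_pos b hbpos (2*m+1)).ne' (by positivity)]
    rw [H2, H4]
    ring
  -- limits of even/odd convergents
  have hDAne : D*A*DD ≠ 0 := by positivity
  have heven : Filter.Tendsto (fun m => cfConv b (2*m)) Filter.atTop (nhds (NN/(D*A*DD))) := by
    have := L3.div (L1.const_mul (D*A)) hDAne
    exact this.congr (fun m => (hrepr_even m).symm)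
  have hodd : Filter.Tendsto (fun m => cfConv b (2*m+1)) Filter.atTop (nhds (NN/(D*A*DD))) := by
    have := L4.div (L2.const_mul (D*A)) hDAne
    exact this.congr (fun m => (hrepr_odd m).symm)
  have hmain : Filter.Tendsto (cfConv b) Filter.atTop (nhds (NN/(D*A*DD))) :=
    CFAux.tendsto_parity heven hodd
  -- identify the limit with the statement's ratio
  have hqpoch : ∀ n : ℕ, qPoch (1/A) (1/A) n = CFAux.qp A⁻¹ n := by
    intro n
    unfold qPoch CFAux.qp
    apply Finset.prod_congr rfl
    intro i _
    rw [one_div, ← pow_succ']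
  have hAne : A ≠ 0 := hA0.ne'
  have hCDne : C*D ≠ 0 := (mul_pos hC hD).ne'
  have hDstat : (∑' n : ℕ, 1 / ((C*D)^n * A^(n^2+n) * qPoch (1/A) (1/A) n)) = DD := by
    rw [hDDdef]
    apply tsum_congr
    intro n
    rw [hqpoch n, show n^2+n = n*n+n from by ring]
    have h1 : CFAux.qp A⁻¹ n ≠ 0 := (hqppos n).ne'
    rw [inv_pow, inv_pow, one_div, one_div, mul_inv, mul_inv]
  have hNstat : (∑' n : ℕ, 1 / (C^n * D^(n+1) * A^((n+1)^2) * qPoch (1/A) (1/A) n))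
      = NN * (1/(D*A)) := by
    rw [hNNdef, ← tsum_mul_right]
    apply tsum_congr
    intro n
    rw [hqpoch n]
    have h1 : CFAux.qp A⁻¹ n ≠ 0 := (hqppos n).ne'
    simp only [inv_pow]
    field_simp
    rw [show (n+1)^2 = n*n+2*n+1 from by ring, pow_add, pow_add]
    ring
  rw [hNstat, hDstat, mul_one_div, div_div]
  exact hmain
end

section
/- Let a ≥ 2 be a positive integer and suppose c is a positive rational such that c·a is a positive integer. Then the infinite regular continued fraction [0; c·a, c·a², c·a³, ...] equals (Σ_{n=0}^∞ 1/(c^{2n+1} · a^{2n²+3n+1} · (1/a²; 1/a²)_n)) / (Σ_{n=0}^∞ 1/(c^{2n} · a^{2n²+n} · (1/a²; 1/a²)_n)). -/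
open Filter Topology

set_option linter.unusedSectionVars false


lemma qPoch_succ (c q : ℝ) (n : ℕ) :
    qPoch c q (n+1) = qPoch c q n * (1 - c * q ^ n) := by
  simp [qPoch, Finset.prod_range_succ]

lemma qPoch_lb {q : ℝ} (hq0 : 0 < q) (hq : q ≤ 1/4) (n : ℕ) :
    2/3 + q^n/3 ≤ qPoch q q n := by
  induction n with
  | zero => simp [qPoch]; norm_num
  | succ n ih =>
    have hqn : 0 < q ^ n := pow_pos hq0 n
    have hqn1 : q ^ n ≤ 1 := pow_le_one₀ hq0.le (by linarith)
    have hfac : 0 < 1 - q * q ^ n := by nlinarith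
    rw [qPoch_succ]
    have h1 : (2/3 + q^n/3) * (1 - q * q^n) ≤ qPoch q q n * (1 - q * q^n) := by
      apply mul_le_mul_of_nonneg_right ih hfac.le
    have h2 : 2/3 + q^(n+1)/3 ≤ (2/3 + q^n/3) * (1 - q * q^n) := by
      rw [pow_succ]
      have haux : 0 ≤ q^n * (1 - 3*q - q*q^n) := by
        apply mul_nonneg hqn.le
        nlinarith
      nlinarith [haux]
    linarith

lemma qPoch_pos {q : ℝ} (hq0 : 0 < q) (hq : q ≤ 1/4) (n : ℕ) :
    0 < qPoch q q n := by
  have := qPoch_lb hq0 hq n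
  have : 0 < q ^ n := pow_pos hq0 n
  nlinarith [qPoch_lb hq0 hq n]

noncomputable def Gfun (q y : ℝ) : ℝ := ∑' n : ℕ, y ^ n * q ^ (n^2) / qPoch q q n

lemma Gterm_nonneg {q y : ℝ} (hq0 : 0 < q) (hq : q ≤ 1/4) (hy : 0 ≤ y) (n : ℕ) :
    0 ≤ y ^ n * q ^ (n^2) / qPoch q q n :=
  div_nonneg (mul_nonneg (pow_nonneg hy n) (pow_nonneg hq0.le _)) (qPoch_pos hq0 hq n).le

lemma Gterm_le {q y : ℝ} (hq0 : 0 < q) (hq : q ≤ 1/4) (hy : 0 ≤ y) (hyq : y * q ≤ 1/2) (n : ℕ) :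
    y ^ n * q ^ (n^2) / qPoch q q n ≤ (3/2) * (1/2)^n := by
  have hP := qPoch_lb hq0 hq n
  have hPp := qPoch_pos hq0 hq n
  have key : y ^ n * q ^ (n^2) ≤ (1/2)^n := by
    have h1 : y ^ n * q ^ (n^2) = (y*q)^n * q^(n^2 - n) := by
      rw [mul_pow, mul_assoc, ← pow_add]
      rw [Nat.add_sub_cancel' (Nat.le_self_pow two_ne_zero n)]
    rw [h1]
    have h2 : (y*q)^n ≤ (1/2)^n := by
      apply pow_le_pow_left₀ (mul_nonneg hy hq0.le) hyq n
    have h3 : q^(n^2-n) ≤ 1 := pow_le_one₀ hq0.le (by linarith)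
    have h4 : (0:ℝ) ≤ (y*q)^n := pow_nonneg (mul_nonneg hy hq0.le) n
    calc (y*q)^n * q^(n^2-n) ≤ (y*q)^n * 1 := by
          exact mul_le_mul_of_nonneg_left h3 h4
      _ = (y*q)^n := by ring
      _ ≤ (1/2)^n := h2
  have h5 : y ^ n * q ^ (n^2) / qPoch q q n ≤ y ^ n * q ^ (n^2) / (2/3) := by
    apply div_le_div_of_nonneg_left _ (by norm_num) _
    · exact mul_nonneg (pow_nonneg hy n) (pow_nonneg hq0.le _)
    · linarith [pow_pos hq0 n]
  calc y ^ n * q ^ (n^2) / qPoch q q n ≤ y ^ n * q ^ (n^2) / (2/3) := h5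
    _ = (3/2) * (y ^ n * q ^ (n^2)) := by ring
    _ ≤ (3/2) * (1/2)^n := by linarith [key]

lemma Gsummable {q y : ℝ} (hq0 : 0 < q) (hq : q ≤ 1/4) (hy : 0 ≤ y) (hyq : y * q ≤ 1/2) :
    Summable (fun n : ℕ => y ^ n * q ^ (n^2) / qPoch q q n) := by
  apply Summable.of_nonneg_of_le (Gterm_nonneg hq0 hq hy) (Gterm_le hq0 hq hy hyq)
  exact (summable_geometric_of_lt_one (by norm_num) (by norm_num)).mul_left _

lemma Gfun_ge_one {q y : ℝ} (hq0 : 0 < q) (hq : q ≤ 1/4) (hy : 0 ≤ y) (hyq : y * q ≤ 1/2) :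
    1 ≤ Gfun q y := by
  have h0 : y ^ 0 * q ^ (0^2) / qPoch q q 0 = 1 := by simp [qPoch]
  calc (1:ℝ) = y ^ 0 * q ^ (0^2) / qPoch q q 0 := h0.symm
    _ ≤ Gfun q y := Summable.le_tsum (Gsummable hq0 hq hy hyq) 0
        (fun n _ => Gterm_nonneg hq0 hq hy n)

lemma Gfun_funeq {q y : ℝ} (hq0 : 0 < q) (hq : q ≤ 1/4) (hy : 0 ≤ y) (hyq : y * q ≤ 1/2) :
    Gfun q y = Gfun q (y*q) + y*q * Gfun q (y*q^2) := by
  have hq1 : q ≤ 1 := by linarith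
  have hyq0 : 0 ≤ y*q := mul_nonneg hy hq0.le
  have hyq2 : y*q*q ≤ 1/2 := by nlinarith
  have hy2 : 0 ≤ y*q^2 := by positivity
  have hyq3 : (y*q^2)*q ≤ 1/2 := by nlinarith
  have S1 := Gsummable hq0 hq hy hyq
  have S2 := Gsummable hq0 hq hyq0 hyq2
  have S3 := Gsummable hq0 hq hy2 hyq3
  have hd : Summable (fun n : ℕ => y^n * q^(n^2)/qPoch q q n - (y*q)^n * q^(n^2)/qPoch q q n) :=
    S1.sub S2
  have E1 : ∑' n : ℕ, (y^n * q^(n^2)/qPoch q q n - (y*q)^n * q^(n^2)/qPoch q q n)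
      = Gfun q y - Gfun q (y*q) := Summable.tsum_sub S1 S2
  have E2 := Summable.tsum_eq_zero_add hd
  have key : ∀ n : ℕ,
      (y^(n+1) * q^((n+1)^2)/qPoch q q (n+1) - (y*q)^(n+1) * q^((n+1)^2)/qPoch q q (n+1))
      = y*q * ((y*q^2)^n * q^(n^2)/qPoch q q n) := by
    intro n
    have hPn := qPoch_pos hq0 hq n
    have hqn1 : q^n ≤ 1 := pow_le_one₀ hq0.le hq1
    have hqnp : 0 < q^n := pow_pos hq0 n
    have hfac : (0:ℝ) < 1 - q*q^n := by nlinarith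
    rw [qPoch_succ, show (n+1)^2 = n^2 + 2*n + 1 from by ring]
    field_simp
    ring
  have E3 : ∑' n : ℕ,
      (y^(n+1) * q^((n+1)^2)/qPoch q q (n+1) - (y*q)^(n+1) * q^((n+1)^2)/qPoch q q (n+1))
      = y*q * Gfun q (y*q^2) := by
    rw [tsum_congr key, tsum_mul_left]
    rfl
  have E0 : (y^0 * q^(0^2)/qPoch q q 0 - (y*q)^0 * q^(0^2)/qPoch q q 0) = 0 := by
    simp [qPoch]
  rw [E2, E0, E3] at E1
  linarith [E1]



noncomputable def cft : List ℝ → ℝ → ℝ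
  | [], t => t
  | x :: xs, t => x + 1 / cft xs t

lemma contFracList_eq_cft : ∀ l : List ℝ, contFracList l = cft l 0
  | [] => by simp [contFracList, cft]
  | [x] => by simp [contFracList, cft]
  | x :: y :: xs => by
    rw [contFracList, cft, contFracList_eq_cft (y :: xs)]

lemma cft_nonneg : ∀ (l : List ℝ), (∀ x ∈ l, 0 ≤ x) → ∀ t, 0 ≤ t → 0 ≤ cft l t
  | [], _, t, ht => ht
  | x :: xs, h, t, ht => by
    rw [cft]
    have h1 : 0 ≤ cft xs t := cft_nonneg xs (fun y hy => h y (List.mem_cons_of_mem _ hy)) t ht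
    have h2 : (0:ℝ) ≤ 1 / cft xs t := by positivity
    have := h x List.mem_cons_self
    linarith

lemma cft_ge_head (x : ℝ) (l : List ℝ) (h : ∀ y ∈ l, 0 ≤ y) (t : ℝ) (ht : 0 ≤ t) :
    x ≤ cft (x :: l) t := by
  rw [cft]
  have h1 : 0 ≤ cft l t := cft_nonneg l h t ht
  have h2 : (0:ℝ) ≤ 1 / cft l t := by positivity
  linarith

lemma cft_diff : ∀ (l : List ℝ) (x s : ℝ), (∀ y ∈ l, (2:ℝ) ≤ y) → 2 ≤ s →
    |cft (x :: l) 0 - cft (x :: l) s| ≤ (1/2) * (1/4) ^ l.length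
  | [], x, s, _, hs => by
    simp only [cft, List.length_nil, pow_zero, mul_one]
    rw [show x + 1/(0:ℝ) - (x + 1/s) = -(1/s) by norm_num]
    rw [abs_neg, abs_of_nonneg (by positivity)]
    rw [div_le_div_iff₀ (by linarith) (by norm_num)]
    linarith
  | y :: ys, x, s, hl, hs => by
    have hy : (2:ℝ) ≤ y := hl y List.mem_cons_self
    have hys : ∀ z ∈ ys, (2:ℝ) ≤ z := fun z hz => hl z (List.mem_cons_of_mem _ hz)
    have hys0 : ∀ z ∈ ys, (0:ℝ) ≤ z := fun z hz => le_trans (by norm_num) (hys z hz)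
    have ih := cft_diff ys y s hys hs
    have hA : 2 ≤ cft (y :: ys) 0 := le_trans hy (cft_ge_head y ys hys0 0 le_rfl)
    have hB : 2 ≤ cft (y :: ys) s := le_trans hy (cft_ge_head y ys hys0 s (by linarith))
    have hA0 : (0:ℝ) < cft (y :: ys) 0 := by linarith
    have hB0 : (0:ℝ) < cft (y :: ys) s := by linarith
    show |x + 1 / cft (y :: ys) 0 - (x + 1 / cft (y :: ys) s)| ≤ _
    have e : x + 1 / cft (y :: ys) 0 - (x + 1 / cft (y :: ys) s)
        = (cft (y :: ys) s - cft (y :: ys) 0) / (cft (y :: ys) 0 * cft (y :: ys) s) := by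
      field_simp
      ring
    rw [e, abs_div, abs_of_pos (mul_pos hA0 hB0)]
    have h4 : (4:ℝ) ≤ cft (y :: ys) 0 * cft (y :: ys) s := by nlinarith
    have habs : |cft (y :: ys) s - cft (y :: ys) 0| ≤ (1/2) * (1/4) ^ ys.length := by
      rw [abs_sub_comm]; exact ih
    calc |cft (y :: ys) s - cft (y :: ys) 0| / (cft (y :: ys) 0 * cft (y :: ys) s)
        ≤ ((1/2) * (1/4) ^ ys.length) / 4 := by
          apply div_le_div₀ (by positivity) habs (by norm_num) h4
      _ = (1/2) * (1/4) ^ (y :: ys).length := by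
          rw [List.length_cons, pow_succ]; ring



noncomputable def qq (A : ℝ) : ℝ := 1 / A ^ 2
noncomputable def xx (A c : ℝ) : ℝ := 1 / (A * c ^ 2)
noncomputable def ffD (A c : ℝ) (k : ℕ) : ℝ :=
  (1 / (c * A ^ (k+1))) *
    (Gfun (qq A) (xx A c * qq A ^ (k+1)) / Gfun (qq A) (xx A c * qq A ^ k))

section basic
variable {A c : ℝ} (hA : 2 ≤ A) (hc : 0 < c) (hcA : 1 ≤ c * A)
include hA

lemma hA0 : (0:ℝ) < A := by linarith

lemma hq0 : 0 < qq A := by rw [qq]; have := hA0 hA; positivity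

lemma hq4 : qq A ≤ 1/4 := by
  rw [qq, div_le_div_iff₀ (by nlinarith) (by norm_num)]
  nlinarith

lemma hq1 : qq A ≤ 1 := le_trans (hq4 hA) (by norm_num)

include hc hcA

lemma hx0 : 0 ≤ xx A c := by rw [xx]; have := hA0 hA; positivity

lemma hxA : xx A c ≤ A := by
  rw [xx, div_le_iff₀ (by nlinarith)]
  nlinarith

lemma ycond1 (k : ℕ) : 0 ≤ xx A c * qq A ^ k :=
  mul_nonneg (hx0 hA hc hcA) (pow_nonneg (hq0 hA).le k)

lemma ycond2 (k : ℕ) : (xx A c * qq A ^ k) * qq A ≤ 1/2 := by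
  have h1 : xx A c * qq A ^ k ≤ A := by
    calc xx A c * qq A ^ k ≤ A * 1 := by
          apply mul_le_mul (hxA hA hc hcA) (pow_le_one₀ (hq0 hA).le (hq1 hA) )
            (pow_nonneg (hq0 hA).le k) (by linarith)
      _ = A := mul_one A
  have h2 : A * qq A ≤ 1/2 := by
    rw [qq]
    rw [mul_one_div, div_le_div_iff₀ (by nlinarith) (by norm_num)]
    nlinarith
  calc (xx A c * qq A ^ k) * qq A ≤ A * qq A :=
        mul_le_mul_of_nonneg_right h1 (hq0 hA).le
    _ ≤ 1/2 := h2
end basic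


section ffsec
variable {A c : ℝ} (hA : 2 ≤ A) (hc : 0 < c) (hcA : 1 ≤ c * A)
include hA hc hcA

lemma Gpos (k : ℕ) : 0 < Gfun (qq A) (xx A c * qq A ^ k) :=
  lt_of_lt_of_le one_pos
    (Gfun_ge_one (hq0 hA) (hq4 hA) (ycond1 hA hc hcA k) (ycond2 hA hc hcA k))

lemma ffD_pos (k : ℕ) : 0 < ffD A c k := by
  rw [ffD]
  have h1 := Gpos hA hc hcA (k+1)
  have h2 := Gpos hA hc hcA k
  have := hA0 hA
  positivity

lemma hxq (k : ℕ) : xx A c * qq A ^ (k+1) = 1 / (c^2 * (A^(k+1) * A^(k+2))) := by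
  have hA0' := hA0 hA
  have h1 : (qq A)^(k+1) = 1 / A^(2*(k+1)) := by
    rw [qq, div_pow, one_pow, ← pow_mul]
  have h2 : A^(k+1) * A^(k+2) = A * A^(2*(k+1)) := by
    rw [← pow_add, ← pow_succ']
    congr 1
    omega
  rw [xx, h1, h2, div_mul_div_comm, one_mul]
  congr 1
  ring

lemma ffD_rec (k : ℕ) : ffD A c k = 1 / (c * A^(k+1) + ffD A c (k+1)) := by
  have hA0' := hA0 hA
  have hGm := Gpos hA hc hcA k
  have hG0 := Gpos hA hc hcA (k+1)
  have hGp := Gpos hA hc hcA (k+2)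
  have hfe : Gfun (qq A) (xx A c * qq A ^ k)
      = Gfun (qq A) (xx A c * qq A ^ (k+1))
        + (1 / (c^2 * (A^(k+1) * A^(k+2)))) * Gfun (qq A) (xx A c * qq A ^ (k+2)) := by
    have h := Gfun_funeq (hq0 hA) (hq4 hA) (ycond1 hA hc hcA k) (ycond2 hA hc hcA k)
    rw [show xx A c * qq A ^ k * qq A = xx A c * qq A ^ (k+1) from by rw [pow_succ]; ring,
        show xx A c * qq A ^ k * qq A ^ 2 = xx A c * qq A ^ (k+2) from by rw [pow_add]; ring]
        at h
    rw [← hxq hA hc hcA k]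
    exact h
  have hffp := ffD_pos hA hc hcA (k+1)
  have hden : 0 < c * A^(k+1) + ffD A c (k+1) := by positivity
  rw [ffD, eq_div_iff (ne_of_gt hden), ffD]
  have hPk1 : (0:ℝ) < A ^ (k+1) := pow_pos hA0' _
  have hPk2 : (0:ℝ) < A ^ (k+2) := pow_pos hA0' _
  field_simp at hfe ⊢
  rw [show k+1+1 = k+2 from rfl]
  linear_combination (-1) * hfe

lemma ffD_le (k : ℕ) : ffD A c k ≤ 1 / (c * A^(k+1)) := by
  rw [ffD_rec hA hc hcA k]
  have hA0' := hA0 hA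
  have hffp := ffD_pos hA hc hcA (k+1)
  apply one_div_le_one_div_of_le (by positivity)
  linarith

lemma ffD_le_one (k : ℕ) : ffD A c k ≤ 1 := by
  have h := ffD_le hA hc hcA k
  have hA0' := hA0 hA
  have h1 : 1 ≤ c * A^(k+1) := by
    have : (1:ℝ) ≤ A ^ k := one_le_pow₀ (by linarith)
    calc (1:ℝ) ≤ (c*A) * A^k := by nlinarith
      _ = c * A^(k+1) := by rw [pow_succ]; ring
  rw [le_div_iff₀ (by linarith)] at *
  nlinarith

lemma ffD_le_half (k : ℕ) (hk : 1 ≤ k) : ffD A c k ≤ 1/2 := by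
  have h := ffD_le hA hc hcA k
  have hA0' := hA0 hA
  have h1 : 2 ≤ c * A^(k+1) := by
    have h2 : A ≤ A ^ k := le_self_pow₀ (by linarith) (by omega)
    have h3 : (0:ℝ) < A^k := pow_pos hA0' k
    calc (2:ℝ) ≤ A := hA
      _ ≤ (c*A) * A^k := by nlinarith
      _ = c * A^(k+1) := by rw [pow_succ]; ring
  calc ffD A c k ≤ 1/(c*A^(k+1)) := h
    _ ≤ 1/2 := by apply one_div_le_one_div_of_le (by norm_num) h1

end ffsec

lemma inv_term {K M P : ℝ} (hK : K ≠ 0) (e : K * M = 1) : 1/(K*P) = M/P := by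
  have hM : M = 1/K := by
    rw [eq_div_iff hK]
    linarith [e, mul_comm K M]
  rw [hM, div_div]

section keys
variable {A c : ℝ} (hA : 2 ≤ A) (hc : 0 < c) (hcA : 1 ≤ c * A)
include hA hc hcA

lemma Dkey (n : ℕ) :
    c^(2*n) * A^(2*n^2+n) * ((xx A c)^n * (qq A)^(n^2)) = 1 := by
  have hA0' : (0:ℝ) < A := by linarith
  have h1 : (xx A c)^n = 1/(A^n * (c^2)^n) := by
    rw [xx, div_pow, one_pow, mul_pow]
  have h2 : (qq A)^(n^2) = 1/((A^2)^(n^2)) := by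
    rw [qq, div_pow, one_pow]
  rw [h1, h2, pow_add, ← pow_mul, ← pow_mul]
  field_simp

lemma Nkey (n : ℕ) :
    c^(2*n+1) * A^(2*n^2+3*n+1) * ((1/(c*A)) * ((xx A c * qq A ^ 1)^n * (qq A)^(n^2))) = 1 := by
  have hA0' : (0:ℝ) < A := by linarith
  have hb : xx A c * qq A ^ 1 = 1/(A^3*c^2) := by
    rw [xx, qq, pow_one]
    field_simp
  have h1 : (xx A c * qq A ^ 1)^n = 1/((A^3)^n * (c^2)^n) := by
    rw [hb, div_pow, one_pow, mul_pow]
  have h2 : (qq A)^(n^2) = 1/((A^2)^(n^2)) := by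
    rw [qq, div_pow, one_pow]
  rw [h1, h2, pow_add, pow_add, pow_add, ← pow_mul, ← pow_mul, ← pow_mul]
  field_simp

lemma hDsum :
    (∑' n : ℕ, 1 / (c ^ (2*n) * A ^ (2*n^2+n) * qPoch (1/A^2) (1/A^2) n))
      = Gfun (qq A) (xx A c * qq A ^ 0) := by
  rw [pow_zero, mul_one, Gfun]
  apply tsum_congr
  intro n
  have hA0' : (0:ℝ) < A := by linarith
  have hK : c^(2*n) * A^(2*n^2+n) ≠ 0 := by positivity
  exact inv_term (P := qPoch (qq A) (qq A) n) hK (Dkey hA hc hcA n)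

lemma hNsum :
    (∑' n : ℕ, 1 / (c ^ (2*n+1) * A ^ (2*n^2+3*n+1) * qPoch (1/A^2) (1/A^2) n))
      = (1/(c*A)) * Gfun (qq A) (xx A c * qq A ^ 1) := by
  rw [Gfun, ← tsum_mul_left]
  apply tsum_congr
  intro n
  have hA0' : (0:ℝ) < A := by linarith
  have hK : c^(2*n+1) * A^(2*n^2+3*n+1) ≠ 0 := by positivity
  have h := inv_term (P := qPoch (qq A) (qq A) n) hK (Nkey hA hc hcA n)
  rw [mul_div_assoc] at h
  exact h

end keys

theorem aux_main (A c : ℝ) (hA : 2 ≤ A) (hc : 0 < c) (hcA : 1 ≤ c * A) :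
    Filter.Tendsto (cfConv (fun i => if i = 0 then 0 else c * A ^ i)) Filter.atTop
      (nhds ((∑' n : ℕ, 1 / (c ^ (2 * n + 1) * A ^ (2 * n ^ 2 + 3 * n + 1) *
          qPoch (1 / A ^ 2) (1 / A ^ 2) n)) /
        (∑' n : ℕ, 1 / (c ^ (2 * n) * A ^ (2 * n ^ 2 + n) *
          qPoch (1 / A ^ 2) (1 / A ^ 2) n)))) := by
  have hA0' : (0:ℝ) < A := by linarith
  set b : ℕ → ℝ := fun i => if i = 0 then 0 else c * A ^ i with hbdef
  set f : ℕ → ℝ := ffD A c with hfdef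
  -- identify the limit with ffD A c 0
  have hval : (∑' n : ℕ, 1 / (c ^ (2 * n + 1) * A ^ (2 * n ^ 2 + 3 * n + 1) *
          qPoch (1 / A ^ 2) (1 / A ^ 2) n)) /
        (∑' n : ℕ, 1 / (c ^ (2 * n) * A ^ (2 * n ^ 2 + n) *
          qPoch (1 / A ^ 2) (1 / A ^ 2) n)) = f 0 := by
    rw [hNsum hA hc hcA, hDsum hA hc hcA, mul_div_assoc, hfdef, ffD]
    norm_num
  rw [hval]
  -- basic facts about b
  have hbk : ∀ k : ℕ, k ≠ 0 → b k = c * A ^ k := by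
    intro k hk; simp [hbdef, hk]
  have hb1 : 1 ≤ b 1 := by rw [hbk 1 one_ne_zero, pow_one]; exact hcA
  have hb2 : ∀ k, 2 ≤ k → (2:ℝ) ≤ b k := by
    intro k hk
    rw [hbk k (by omega)]
    obtain ⟨m, rfl⟩ : ∃ m, k = m + 2 := ⟨k - 2, by omega⟩
    have h1 : A ≤ A ^ (m+1) := le_self_pow₀ (by linarith) (by omega)
    have h2 : c * A ^ (m+2) = (c * A) * A ^ (m+1) := by rw [pow_succ]; ring
    nlinarith [pow_pos hA0' (m+1)]
  -- list structure
  have lst_cons : ∀ (j m : ℕ),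
      ((List.range (m+1)).map (fun i => b (i+j))) = b j :: ((List.range m).map (fun i => b (i+(j+1)))) := by
    intro j m
    rw [List.range_succ_eq_map, List.map_cons, List.map_map]
    congr 1
    · simp
    · have : ((fun i => b (i+j)) ∘ Nat.succ) = (fun i => b (i+(j+1))) := by
        funext i
        simp only [Function.comp]
        congr 1
        omega
      rw [this]
  -- the tail identity
  have tail_id : ∀ (m k : ℕ),
      cft ((List.range (m+1)).map (fun i => b (i+(k+1)))) (1/f (k+m+1)) = 1/f k := by
    intro m
    induction m with
    | zero =>
      intro k
      rw [lst_cons (k+1) 0]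
      simp only [List.range_zero, List.map_nil]
      show b (k+1) + 1 / cft [] (1/f (k+0+1)) = 1/f k
      show b (k+1) + 1 / (1/f (k+0+1)) = 1/f k
      rw [show k+0+1 = k+1 from by omega, one_div_one_div, hbk (k+1) (by omega),
        hfdef, ffD_rec hA hc hcA k, one_div_one_div]
    | succ m ih =>
      intro k
      rw [lst_cons (k+1) (m+1)]
      show b (k+1) + 1 / cft ((List.range (m+1)).map (fun i => b (i+(k+1+1)))) (1/f (k+(m+1)+1)) = 1/f k
      rw [show k+(m+1)+1 = (k+1)+m+1 from by omega, ih (k+1), one_div_one_div,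
        hbk (k+1) (by omega), hfdef, ffD_rec hA hc hcA k, one_div_one_div]
  -- convergents via cft
  have hconv : ∀ n : ℕ, cfConv b n = 1 / cft ((List.range n).map (fun i => b (i+1))) 0 := by
    intro n
    rw [cfConv, contFracList_eq_cft, List.range_succ_eq_map, List.map_cons, List.map_map]
    have hcomp : (b ∘ Nat.succ) = fun i => b (i+1) := by funext i; rfl
    rw [hcomp]
    show b 0 + 1 / cft ((List.range n).map (fun i => b (i+1))) 0 = _
    have hb0 : b 0 = 0 := by simp [hbdef]
    rw [hb0, zero_add]
  -- the quantitative bound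
  have bound : ∀ m : ℕ, |cfConv b (m+1) - f 0| ≤ 2 * (1/4) ^ (m+1) := by
    intro m
    have hf0pos : 0 < f 0 := ffD_pos hA hc hcA 0
    have hfm1pos : 0 < f (m+1) := ffD_pos hA hc hcA (m+1)
    have hs2 : 2 ≤ 1 / f (m+1) := by
      have h := ffD_le_half hA hc hcA (m+1) (by omega)
      rw [le_div_iff₀ hfm1pos]
      rw [hfdef]
      linarith
    have htail := tail_id m 0
    rw [show (0:ℕ)+m+1 = m+1 from by omega] at htail
    have hlist := lst_cons 1 m
    have hlist0 : ((List.range (m+1)).map (fun i => b (i+(0+1)))) = ((List.range (m+1)).map (fun i => b (i+1))) := by norm_num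
    rw [hlist0, hlist] at htail
    have hentries : ∀ y ∈ (List.range m).map (fun i => b (i+(1+1))), (2:ℝ) ≤ y := by
      intro y hy
      rw [List.mem_map] at hy
      obtain ⟨i, _, rfl⟩ := hy
      exact hb2 (i+(1+1)) (by omega)
    have hentries0 : ∀ y ∈ (List.range m).map (fun i => b (i+(1+1))), (0:ℝ) ≤ y :=
      fun y hy => le_trans (by norm_num) (hentries y hy)
    have hdiff := cft_diff ((List.range m).map (fun i => b (i+(1+1)))) (b 1) (1/f (m+1)) hentries hs2
    rw [List.length_map, List.length_range] at hdiff
    set L := (List.range m).map (fun i => b (i+(1+1))) with hLdef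
    have hA1 : 1 ≤ cft (b 1 :: L) 0 :=
      le_trans hb1 (cft_ge_head (b 1) L hentries0 0 le_rfl)
    have hB1 : cft (b 1 :: L) (1/f (m+1)) = 1/f 0 := htail
    have hB1ge : 1 ≤ cft (b 1 :: L) (1/f (m+1)) := by
      rw [hB1]
      have h := ffD_le_one hA hc hcA 0
      rw [le_div_iff₀ hf0pos, hfdef]
      linarith
    have hA1pos : 0 < cft (b 1 :: L) 0 := by linarith
    have hB1pos : 0 < cft (b 1 :: L) (1/f (m+1)) := by linarith
    have hcfc : cfConv b (m+1) = 1 / cft (b 1 :: L) 0 := by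
      rw [hconv (m+1), hlist]
    have hf0 : f 0 = 1 / cft (b 1 :: L) (1/f (m+1)) := by
      rw [hB1, one_div_one_div]
    rw [hcfc, hf0]
    have e : 1 / cft (b 1 :: L) 0 - 1 / cft (b 1 :: L) (1/f (m+1))
        = (cft (b 1 :: L) (1/f (m+1)) - cft (b 1 :: L) 0)
          / (cft (b 1 :: L) 0 * cft (b 1 :: L) (1/f (m+1))) := by
      rw [div_sub_div _ _ (ne_of_gt hA1pos) (ne_of_gt hB1pos)]
      congr 1
      ring
    rw [e, abs_div, abs_of_pos (mul_pos hA1pos hB1pos)]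
    have hmul1 : 1 ≤ cft (b 1 :: L) 0 * cft (b 1 :: L) (1/f (m+1)) := by nlinarith
    calc |cft (b 1 :: L) (1/f (m+1)) - cft (b 1 :: L) 0|
            / (cft (b 1 :: L) 0 * cft (b 1 :: L) (1/f (m+1)))
        ≤ |cft (b 1 :: L) (1/f (m+1)) - cft (b 1 :: L) 0| := by
          apply div_le_self (abs_nonneg _) hmul1
      _ = |cft (b 1 :: L) 0 - cft (b 1 :: L) (1/f (m+1))| := abs_sub_comm _ _
      _ ≤ (1/2) * (1/4) ^ m := hdiff
      _ ≤ 2 * (1/4) ^ (m+1) := by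
          rw [pow_succ]
          nlinarith [pow_pos (show (0:ℝ) < 1/4 from by norm_num) m]
  -- conclude by squeezing
  rw [tendsto_iff_dist_tendsto_zero]
  have h0 : Filter.Tendsto (fun n : ℕ => (2:ℝ) * (1/4) ^ n) Filter.atTop (nhds 0) := by
    have h := tendsto_pow_atTop_nhds_zero_of_lt_one
      (show (0:ℝ) ≤ 1/4 from by norm_num) (show (1/4:ℝ) < 1 from by norm_num)
    simpa using h.const_mul 2
  refine squeeze_zero' (Filter.Eventually.of_forall (fun n => dist_nonneg)) ?_ h0
  filter_upwards [Filter.eventually_ge_atTop 1] with n hn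
  obtain ⟨m, rfl⟩ : ∃ m, n = m + 1 := ⟨n - 1, by omega⟩
  rw [Real.dist_eq]
  exact bound m

/-- Theorem 1.1 (eq. (1.7)): for integer `a ≥ 2` and positive rational `c` with
`c·a ∈ ℤ⁺`, the continued fraction `[0; c·a, c·a², c·a³, …]` equals the given
ratio of series. -/
theorem statement1 (a : ℕ) (ha : 2 ≤ a) (c : ℚ) (hc : 0 < c)
    (hca : ∃ k : ℕ, 0 < k ∧ c * (a : ℚ) = (k : ℚ)) :
    CFracEq
      (fun i => if i = 0 then 0 else (c : ℝ) * (a : ℝ) ^ i)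
      ((∑' n : ℕ, 1 / ((c : ℝ) ^ (2 * n + 1) * (a : ℝ) ^ (2 * n ^ 2 + 3 * n + 1) *
          qPoch (1 / (a : ℝ) ^ 2) (1 / (a : ℝ) ^ 2) n)) /
        (∑' n : ℕ, 1 / ((c : ℝ) ^ (2 * n) * (a : ℝ) ^ (2 * n ^ 2 + n) *
          qPoch (1 / (a : ℝ) ^ 2) (1 / (a : ℝ) ^ 2) n))) := by
  have hA : (2:ℝ) ≤ (a:ℝ) := by exact_mod_cast ha
  have hc' : (0:ℝ) < (c:ℝ) := by exact_mod_cast hc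
  obtain ⟨k, hk0, hck⟩ := hca
  have hcA : (1:ℝ) ≤ (c:ℝ) * (a:ℝ) := by
    have h1 : (c:ℝ) * (a:ℝ) = (k:ℝ) := by exact_mod_cast hck
    rw [h1]
    exact_mod_cast hk0
  exact aux_main (a:ℝ) (c:ℝ) hA hc' hcA
end
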